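/- arXiv:2605.15434 — 7 statements merged into one kernel-verified Lean document; each statement's English description precedes it below -/
import Mathlib

section
/- Let $p$ be a prime, let $m$ be a nonzero integer, and let $k > 10\nu_p(m)$ be an integer, where $\nu_p(m)$ is the $p$-adic valuation of $m$. Then the number $N_{p,k}(m)$ of quadruples $(x_1,x_2,x_3,x_4) \in (\mathbb{Z}/p^k\mathbb{Z})^4$ satisfying $x_1 x_2 + x_3 x_4 \equiv m \pmod{p^k}$ equals $p^{3k}\left(1 - \frac{1}{p^2}\right)\left(1 + \frac{1}{p} + \cdots + \frac{1}{p^{\nu_p(m)}}\right)$. -/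
/-!
Split the solutions modulo `p ^ (K + 1)` according to whether `x₀` or `x₂` is a unit. If one of
them is, the equation can be solved for its partner, which gives `p ^ (3K+1) (p² - 1)` solutions
whatever `m` is. Otherwise both are multiples of `p`, so there are none unless `p ∣ m`. For
`m = p m'`, writing `x₀ = p a`, `x₂ = p c` (each `p`-to-one) turns the equation into
`a x₁ + c x₃ ≡ m' [mod p ^ K]`, whose solutions modulo `p ^ (K + 1)` are `p ^ 4` times those
modulo `p ^ K`. Hence `N_{p^(K+1)}(p m') = p ^ (3K+1) (p² - 1) + p² N_{p^K}(m')`, and induction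
on `ν_p(m)` produces the geometric sum.
-/

theorem Nat.card_subtype_eq_mul_of_card_fiber {α β : Type*} [Finite α] [Finite β] (f : α → β)
    {P : α → Prop} {Q : β → Prop} (h : ∀ x, P x ↔ Q (f x)) {c : ℕ}
    (hc : ∀ y, Q y → Nat.card (f ⁻¹' {y}) = c) :
    Nat.card {x // P x} = Nat.card {y // Q y} * c := by
  classical
  have := Fintype.ofFinite {y // Q y}
  rw [← Nat.card_congr (Equiv.sigmaSubtypeFiberEquivSubtype f h), Nat.card_sigma,
    Finset.sum_congr rfl fun y _ => hc y.1 y.2, Finset.sum_const, smul_eq_mul,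
    Finset.card_univ, Nat.card_eq_fintype_card]

theorem Nat.card_preimage_pi_map {ι : Type*} [Fintype ι] {G H : ι → Type*}
    (f : ∀ i, G i → H i) (y : ∀ i, H i) :
    Nat.card ((fun (x : ∀ i, G i) i => f i (x i)) ⁻¹' {y}) =
      ∏ i, Nat.card (f i ⁻¹' {y i}) := by
  rw [← Nat.card_pi]
  exact Nat.card_congr ((Equiv.subtypeEquivRight fun x => funext_iff).trans
    (Equiv.subtypePiEquivPi (p := fun i a => f i a = y i)))

theorem Nat.card_subtype_eq_card_and_add_card_and_not {α : Type*} [Finite α] (P Q : α → Prop) :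
    Nat.card {x // P x} = Nat.card {x // P x ∧ Q x} + Nat.card {x // P x ∧ ¬Q x} := by
  classical
  rw [← Nat.card_sum]
  exact Nat.card_congr <| (Equiv.sumCompl fun x : {x // P x} => Q x).symm.trans <|
    (Equiv.subtypeSubtypeEquivSubtypeInter P Q).sumCongr
      (Equiv.subtypeSubtypeEquivSubtypeInter P (¬Q ·))

theorem AddMonoidHom.card_preimage_singleton_of_mem_range {G H : Type*} [AddGroup G]
    [AddGroup H] (f : G →+ H) {y : H} (hy : y ∈ f.range) :
    Nat.card (f ⁻¹' {y}) = Nat.card f.ker := by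
  obtain ⟨x, rfl⟩ := hy
  exact Nat.card_congr (f.fiberEquivKer x)

theorem AddMonoidHom.card_ker_mul_card_range {G H : Type*} [AddGroup G] [AddGroup H]
    (f : G →+ H) : Nat.card f.ker * Nat.card f.range = Nat.card G := by
  rw [← AddSubgroup.index_ker, AddSubgroup.card_mul_index]

noncomputable def repCount (R : Type*) [CommRing R] (m : R) : ℕ :=
  Nat.card {x : Fin 4 → R // x 0 * x 1 + x 2 * x 3 = m}

noncomputable def repCountNonunit (R : Type*) [CommRing R] (m : R) : ℕ :=
  Nat.card {x : Fin 4 → R // x 0 * x 1 + x 2 * x 3 = m ∧ ¬IsUnit (x 0) ∧ ¬IsUnit (x 2)}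

section CommRing

variable {R : Type*} [CommRing R]

noncomputable def solEquivOfIsUnit (m : R) (Q : R → Prop) :
    {x : Fin 4 → R // x 0 * x 1 + x 2 * x 3 = m ∧ IsUnit (x 0) ∧ Q (x 2)} ≃
      Rˣ × {c // Q c} × R where
  toFun x := (x.2.2.1.unit, ⟨x.1 2, x.2.2.2⟩, x.1 3)
  invFun y := ⟨![y.1, ↑y.1⁻¹ * (m - y.2.1 * y.2.2), y.2.1, y.2.2], by simp [y.2.1.2]⟩
  left_inv := by
    rintro ⟨x, hx, hu, hQ⟩
    ext i
    fin_cases i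
    · simp
    · simp [← hx, ← mul_assoc]
    · simp
    · simp
  right_inv y := by ext <;> simp

theorem card_sol_isUnit_and (m : R) (Q : R → Prop) :
    Nat.card {x : Fin 4 → R // x 0 * x 1 + x 2 * x 3 = m ∧ IsUnit (x 0) ∧ Q (x 2)} =
      Nat.card Rˣ * Nat.card {c // Q c} * Nat.card R := by
  rw [Nat.card_congr (solEquivOfIsUnit m Q), Nat.card_prod, Nat.card_prod, mul_assoc]

theorem card_sol_not_isUnit_isUnit (m : R) :
    Nat.card {x : Fin 4 → R // x 0 * x 1 + x 2 * x 3 = m ∧ ¬IsUnit (x 0) ∧ IsUnit (x 2)} =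
      Nat.card Rˣ * Nat.card {c : R // ¬IsUnit c} * Nat.card R := by
  rw [← card_sol_isUnit_and m]
  refine Nat.card_congr <| Equiv.subtypeEquiv
    (Equiv.arrowCongr (Equiv.addRight 2) (Equiv.refl R)) fun x => ?_
  change _ ↔ x 2 * x 3 + x 0 * x 1 = m ∧ IsUnit (x 2) ∧ ¬IsUnit (x 0)
  rw [add_comm]
  tauto

theorem repCount_eq_add [Finite R] (m : R) :
    repCount R m = Nat.card Rˣ * Nat.card R * (Nat.card R + Nat.card {c : R // ¬IsUnit c}) +
      repCountNonunit R m := by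
  rw [repCount, repCountNonunit,
    Nat.card_subtype_eq_card_and_add_card_and_not _ fun x : Fin 4 → R => IsUnit (x 0),
    Nat.card_subtype_eq_card_and_add_card_and_not
      (fun x : Fin 4 → R => x 0 * x 1 + x 2 * x 3 = m ∧ ¬IsUnit (x 0)) fun x => IsUnit (x 2)]
  have h := card_sol_isUnit_and m fun _ => True
  simp only [and_true] at h
  simp only [and_assoc]
  rw [h, card_sol_not_isUnit_isUnit, Nat.card_congr (Equiv.subtypeUnivEquiv fun _ => trivial)]
  ring

end CommRing

namespace ZMod

variable {a K : ℕ}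

abbrev castHomPowSucc (a K : ℕ) : ZMod (a ^ (K + 1)) →+* ZMod (a ^ K) :=
  castHom (pow_dvd_pow a (K.le_add_right 1)) _

theorem castHomPowSucc_surjective : Function.Surjective (castHomPowSucc a K) :=
  castHom_surjective _

theorem natCast_mul_eq_natCast_mul_iff (ha : a ≠ 0) (u v : ZMod (a ^ (K + 1))) :
    (a : ZMod (a ^ (K + 1))) * u = a * v ↔ castHomPowSucc a K u = castHomPowSucc a K v := by
  obtain ⟨u, rfl⟩ := intCast_surjective u
  obtain ⟨v, rfl⟩ := intCast_surjective v
  simp only [map_intCast]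
  rw [← Int.cast_natCast, ← Int.cast_mul, ← Int.cast_mul, intCast_eq_intCast_iff_dvd_sub,
    intCast_eq_intCast_iff_dvd_sub, ← mul_sub, Nat.cast_pow, Nat.cast_pow, pow_succ']
  exact mul_dvd_mul_iff_left (by exact_mod_cast ha)

theorem ker_mulLeft_natCast (ha : a ≠ 0) :
    (AddMonoidHom.mulLeft (a : ZMod (a ^ (K + 1)))).ker =
      (castHomPowSucc a K).toAddMonoidHom.ker := by
  ext u
  simpa using natCast_mul_eq_natCast_mul_iff ha u 0

theorem card_ker_castHomPowSucc (ha : a ≠ 0) :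
    Nat.card (castHomPowSucc a K).toAddMonoidHom.ker = a := by
  have h := (castHomPowSucc a K).toAddMonoidHom.card_ker_mul_card_range
  rw [AddMonoidHom.range_eq_top.mpr castHomPowSucc_surjective, AddSubgroup.card_top,
    Nat.card_zmod, Nat.card_zmod] at h
  exact mul_right_cancel₀ (pow_ne_zero K ha) ((h.trans (pow_succ a K)).trans (mul_comm _ _))

variable {p : ℕ} [hp : Fact p.Prime]

theorem not_isUnit_iff_exists_natCast_mul {x : ZMod (p ^ (K + 1))} :
    ¬IsUnit x ↔ ∃ y, (p : ZMod (p ^ (K + 1))) * y = x := by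
  constructor
  · intro hx
    rw [← natCast_zmod_val x, isUnit_iff_coprime, Nat.coprime_pow_right_iff K.succ_pos,
      Nat.coprime_comm, hp.out.coprime_iff_not_dvd, not_not] at hx
    obtain ⟨y, hy⟩ := hx
    exact ⟨y, by rw [← Nat.cast_mul, ← hy, natCast_zmod_val]⟩
  · rintro ⟨y, rfl⟩ hunit
    have : Nontrivial (ZMod (p ^ (K + 1))) :=
      nontrivial_iff.mpr (Nat.one_lt_pow K.succ_ne_zero hp.out.one_lt).ne'
    have hnil : IsNilpotent (p : ZMod (p ^ (K + 1))) :=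
      ⟨K + 1, by rw [← Nat.cast_pow, natCast_self]⟩
    exact hnil.not_isUnit (isUnit_of_mul_isUnit_left hunit)

theorem card_units_prime_pow : Nat.card (ZMod (p ^ (K + 1)))ˣ = p ^ K * (p - 1) := by
  rw [Nat.card_eq_fintype_card, card_units_eq_totient, Nat.totient_prime_pow hp.out K.succ_pos,
    K.succ_sub_one]

theorem card_not_isUnit_prime_pow : Nat.card {x : ZMod (p ^ (K + 1)) // ¬IsUnit x} = p ^ K := by
  set μ := AddMonoidHom.mulLeft (p : ZMod (p ^ (K + 1)))
  have h := μ.card_ker_mul_card_range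
  rw [ker_mulLeft_natCast hp.out.ne_zero, card_ker_castHomPowSucc hp.out.ne_zero,
    Nat.card_zmod] at h
  have hrange : Nat.card {x : ZMod (p ^ (K + 1)) // ¬IsUnit x} = Nat.card μ.range :=
    Nat.card_congr (Equiv.subtypeEquivRight fun x => by
      rw [AddMonoidHom.mem_range]; exact not_isUnit_iff_exists_natCast_mul)
  rw [hrange]
  exact Nat.eq_of_mul_eq_mul_left hp.out.pos (h.trans (pow_succ' p K))

theorem repCountNonunit_natCast_mul (m₀ : ZMod (p ^ (K + 1))) :
    repCountNonunit (ZMod (p ^ (K + 1))) (p * m₀) =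
      p ^ 2 * repCount (ZMod (p ^ K)) (castHomPowSucc p K m₀) := by
  set ρ := castHomPowSucc p K
  set μ := AddMonoidHom.mulLeft (p : ZMod (p ^ (K + 1)))
  have hρ (y) : Nat.card (ρ ⁻¹' {y}) = p :=
    (ρ.toAddMonoidHom.card_preimage_singleton_of_mem_range
      (castHomPowSucc_surjective y)).trans (card_ker_castHomPowSucc hp.out.ne_zero)
  have hμ (y) (hy : ¬IsUnit y) : Nat.card (μ ⁻¹' {y}) = p := by
    rw [μ.card_preimage_singleton_of_mem_range (not_isUnit_iff_exists_natCast_mul.mp hy),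
      ker_mulLeft_natCast hp.out.ne_zero, card_ker_castHomPowSucc hp.out.ne_zero]
  have reduce : Nat.card {x : Fin 4 → ZMod (p ^ (K + 1)) // ρ (x 0 * x 1 + x 2 * x 3) = ρ m₀} =
      repCount (ZMod (p ^ K)) (ρ m₀) * p ^ 4 := by
    refine Nat.card_subtype_eq_mul_of_card_fiber (fun x i => ρ (x i))
      (fun x => by simp only [map_add, map_mul]) fun y _ => ?_
    rw [Nat.card_preimage_pi_map]
    simp [hρ]
  have scale : Nat.card {x : Fin 4 → ZMod (p ^ (K + 1)) // ρ (x 0 * x 1 + x 2 * x 3) = ρ m₀} =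
      repCountNonunit (ZMod (p ^ (K + 1))) (p * m₀) * p ^ 2 := by
    refine Nat.card_subtype_eq_mul_of_card_fiber
      (fun x i => ![μ, AddMonoidHom.id _, μ, AddMonoidHom.id _] i (x i)) (fun x => ?_)
      fun y hy => ?_
    · change _ ↔
        p * x 0 * x 1 + p * x 2 * x 3 = p * m₀ ∧ ¬IsUnit (p * x 0) ∧ ¬IsUnit (p * x 2)
      rw [mul_assoc, mul_assoc, ← mul_add, natCast_mul_eq_natCast_mul_iff hp.out.ne_zero]
      simp only [not_isUnit_iff_exists_natCast_mul, exists_apply_eq_apply, and_true, ρ]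
    · rw [Nat.card_preimage_pi_map, Fin.prod_univ_four]
      simp [hμ _ hy.2.1, hμ _ hy.2.2, sq]
  apply Nat.eq_of_mul_eq_mul_right (pow_pos hp.out.pos 2)
  rw [← scale, reduce]
  ring

theorem repCountNonunit_eq_zero {m : ℤ} (hm : ¬(p : ℤ) ∣ m) :
    repCountNonunit (ZMod (p ^ (K + 1))) m = 0 := by
  rw [repCountNonunit, Nat.card_eq_zero]
  refine Or.inl ⟨fun ⟨x, hx, h0, h2⟩ => hm ?_⟩
  obtain ⟨a, ha⟩ := not_isUnit_iff_exists_natCast_mul.mp h0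
  obtain ⟨c, hc⟩ := not_isUnit_iff_exists_natCast_mul.mp h2
  have h := congrArg (castHom (dvd_pow_self p K.succ_ne_zero) (ZMod p)) hx
  rw [← ha, ← hc] at h
  simpa [← intCast_zmod_eq_zero_iff_dvd] using h.symm

theorem repCount_prime_pow_succ (m : ZMod (p ^ (K + 1))) :
    repCount (ZMod (p ^ (K + 1))) m =
      p ^ (3 * K + 1) * (p - 1) * (p + 1) + repCountNonunit (ZMod (p ^ (K + 1))) m := by
  rw [repCount_eq_add, card_units_prime_pow, card_not_isUnit_prime_pow, Nat.card_zmod]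
  ring

end ZMod

theorem repCount_prime_pow {p : ℕ} [hp : Fact p.Prime] {m : ℤ} (hm : m ≠ 0) {K : ℕ}
    (hK : padicValInt p m ≤ K) :
    (repCount (ZMod (p ^ (K + 1))) m : ℚ) = (p : ℚ) ^ (3 * (K + 1)) * (1 - 1 / (p : ℚ) ^ 2) *
      ∑ j ∈ Finset.range (padicValInt p m + 1), (1 / (p : ℚ)) ^ j := by
  have hp0 : (p : ℚ) ≠ 0 := by exact_mod_cast hp.out.ne_zero
  induction hν : padicValInt p m generalizing m K with
  | zero =>
    have hndvd : ¬(p : ℤ) ∣ m := fun hdvd => by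
      have := (padicValInt_dvd_iff 1 m).mp (by simpa using hdvd)
      omega
    rw [ZMod.repCount_prime_pow_succ, ZMod.repCountNonunit_eq_zero hndvd]
    push_cast [Nat.cast_sub hp.out.one_le]
    rw [add_zero, Finset.sum_range_one, pow_zero, mul_one]
    field_simp
    ring
  | succ ν ih =>
    obtain ⟨m, rfl⟩ : (p : ℤ) ∣ m := by
      simpa using (padicValInt_dvd_iff 1 m).mpr (Or.inr (by omega))
    obtain ⟨K, rfl⟩ : ∃ K', K = K' + 1 := ⟨K - 1, by omega⟩
    have hm' : m ≠ 0 := right_ne_zero_of_mul hm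
    have hν' : padicValInt p m = ν := by
      rw [padicValInt.mul (by exact_mod_cast hp.out.ne_zero) hm',
        padicValInt.self hp.out.one_lt] at hν
      omega
    rw [ZMod.repCount_prime_pow_succ, Int.cast_mul, Int.cast_natCast,
      ZMod.repCountNonunit_natCast_mul, map_intCast]
    push_cast [Nat.cast_sub hp.out.one_le]
    rw [ih hm' (by omega) hν', geom_sum_succ (n := ν + 1)]
    field_simp
    ring

theorem local_density_count (p : ℕ) (hp : p.Prime) (m : ℤ) (hm : m ≠ 0)
    (k : ℕ) (hk : 10 * padicValInt p m < k) :
    (Nat.card {x : Fin 4 → ZMod (p ^ k) //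
        x 0 * x 1 + x 2 * x 3 = (m : ZMod (p ^ k))} : ℚ)
      = (p : ℚ) ^ (3 * k) * (1 - 1 / (p : ℚ) ^ 2) *
        (∑ j ∈ Finset.range (padicValInt p m + 1), (1 / (p : ℚ)) ^ j) := by
  have := Fact.mk hp
  obtain ⟨K, rfl⟩ : ∃ K, k = K + 1 := ⟨k - 1, by omega⟩
  exact repCount_prime_pow hm (by omega)
end

section
/- For every nonzero integer $h$, the product over all primes $p$ of $\left(1 - \frac{1}{p^2}\right)\left(\sum_{j=0}^{\nu_p(h)} p^{-j}\right)$ converges and equals $\frac{1}{\zeta(2)} \sum_{d \mid h} \frac{1}{d}$. -/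
/-!
Split each Euler factor as `(1 - p⁻²) · ∑_{j ≤ ν_p(h)} p⁻ʲ`. The first factors multiply to
`ζ(2)⁻¹` by the Euler product of `ζ`. The second factors equal `1` unless `p ∣ h`, and their
finite product expands, by unique factorization, into `∑_{d ∣ h} d⁻¹`.
-/

open ArithmeticFunction Finset Real

theorem ArithmeticFunction.IsMultiplicative.sum_divisors_eq_prod_primeFactors {R : Type*}
    [CommSemiring R] {f : ArithmeticFunction R} (hf : f.IsMultiplicative) {n : ℕ} (hn : n ≠ 0) :
    ∑ d ∈ n.divisors, f d =
      ∏ p ∈ n.primeFactors, ∑ i ∈ range (n.factorization p + 1), f (p ^ i) := by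
  rw [← coe_zeta_mul_apply,
    (isMultiplicative_zeta.natCast.mul hf).multiplicative_factorization _ hn]
  refine prod_congr n.support_factorization fun p hp => ?_
  dsimp only
  rw [coe_zeta_mul_apply, Nat.sum_divisors_prime_pow (Nat.prime_of_mem_primeFactors hp)]

theorem Nat.sum_divisors_inv_eq_prod_primeFactors {K : Type*} [Semifield K] {n : ℕ}
    (hn : n ≠ 0) :
    ∑ d ∈ n.divisors, (d : K)⁻¹ =
      ∏ p ∈ n.primeFactors, ∑ i ∈ range (n.factorization p + 1), (p : K)⁻¹ ^ i := by
  let f : ArithmeticFunction K := ⟨fun d => (d : K)⁻¹, by simp⟩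
  have hf : f.IsMultiplicative := ⟨by simp [f], fun _ => by simp [f, mul_comm]⟩
  simpa [f, inv_pow] using hf.sum_divisors_eq_prod_primeFactors hn

theorem hasProd_one_sub_inv_prime_sq :
    HasProd (fun p : Nat.Primes => 1 - 1 / (p : ℝ) ^ 2) (6 / π ^ 2) := by
  have h2 : 1 < (2 : ℂ).re := by norm_num
  have hζ : riemannZeta 2 = ((π ^ 2 / 6 : ℝ) : ℂ) := by
    rw [riemannZeta_two]
    push_cast
    rfl
  have hℂ : HasProd (fun p : Nat.Primes => ((1 - 1 / (p : ℝ) ^ 2 : ℝ) : ℂ))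
      ((6 / π ^ 2 : ℝ) : ℂ) := by
    simpa [hζ, Complex.cpow_neg] using
      (riemannZeta_eulerProduct_hasProd h2).inv₀ (riemannZeta_ne_zero_of_one_lt_re h2)
  exact (Complex.isometry_ofReal.isUniformInducing.isInducing.hasProd_iff
    (g := Complex.ofRealHom) _ _).mp hℂ

theorem hasProd_sum_range_padicValInt {K : Type*} [Semifield K] [TopologicalSpace K]
    {h : ℤ} (hh : h ≠ 0) :
    HasProd (fun p : Nat.Primes => ∑ j ∈ range (padicValInt p h + 1), (p : K)⁻¹ ^ j)
      (∑ d ∈ h.natAbs.divisors, (d : K)⁻¹) := by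
  set n := h.natAbs
  set c : ℕ → K := fun p => ∑ j ∈ range (n.factorization p + 1), (p : K)⁻¹ ^ j
  have hval (p : Nat.Primes) : padicValInt p h = n.factorization p :=
    (Nat.factorization_def _ p.2).symm
  simp only [hval]
  have hc : HasProd (fun p : Nat.Primes => c p) (∏ p ∈ n.primeFactors.subtype Nat.Prime, c p) :=
    hasProd_prod_of_ne_finset_one fun p hp => by
      have hp' : n.factorization p = 0 := Finsupp.notMem_support_iff.mp fun hmem =>
        hp (mem_subtype.mpr (n.support_factorization ▸ hmem))
      simp [c, hp']
  rwa [Nat.sum_divisors_inv_eq_prod_primeFactors (Int.natAbs_ne_zero.mpr hh),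
    ← prod_subtype_of_mem (p := Nat.Prime) _ fun p hp => Nat.prime_of_mem_primeFactors hp]

theorem singular_series_product (h : ℤ) (hh : h ≠ 0) :
    Multipliable (fun p : Nat.Primes =>
      (1 - 1 / (p : ℝ) ^ 2) * ∑ j ∈ Finset.range (padicValInt p h + 1), ((p : ℝ))⁻¹ ^ j) ∧
    ((∏' p : Nat.Primes,
        (1 - 1 / (p : ℝ) ^ 2) * ∑ j ∈ Finset.range (padicValInt p h + 1), ((p : ℝ))⁻¹ ^ j : ℝ) : ℂ)
      = (riemannZeta 2)⁻¹ * ∑ d ∈ h.natAbs.divisors, 1 / (d : ℂ) := by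
  have hprod := hasProd_one_sub_inv_prime_sq.mul (hasProd_sum_range_padicValInt (K := ℝ) hh)
  refine ⟨hprod.multipliable, ?_⟩
  rw [hprod.tprod_eq, riemannZeta_two]
  push_cast
  simp only [one_div, inv_div]
end

section
/- Define $J(\lambda) = \int_0^1 \int_0^1 \frac{1}{\alpha\beta} \mu\big((0,\beta] \cap (\lambda - (0,\alpha])\big)\, d\alpha\, d\beta$ where $\mu$ is Lebesgue measure on $\mathbb{R}$. Then for all $0 < \lambda < 2$ the integral converges and satisfies $0 < J(\lambda) \leq 4$, and $J(\lambda) = 0$ for $\lambda \notin (0,2)$. -/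
/-!
The overlap `(0, β] ∩ [λ - α, λ)` is an interval of length `(min β λ - max 0 (λ - α))⁺`. This is
at most `min α β ≤ √(αβ)`, so the integrand is dominated by `α^(-1/2) β^(-1/2)`, whose integral
over the unit square is `2 · 2 = 4`. The length is positive exactly when `λ > 0` and `α + β > λ`;
on the open square this region is open, and nonempty precisely when `0 < λ < 2`.
-/

open MeasureTheory Set

noncomputable def Jfun (lam : ℝ) : ℝ × ℝ → ℝ := fun p =>
  (volume (Set.Ioc (0:ℝ) p.2 ∩ (fun t => lam - t) '' Set.Ioc (0:ℝ) p.1)).toReal / (p.1 * p.2)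

noncomputable def J (lam : ℝ) : ℝ :=
  ∫ p in (Set.Ioo (0:ℝ) 1) ×ˢ (Set.Ioo (0:ℝ) 1), Jfun lam p

theorem Real.volume_Ioc_inter_Ico (a b c d : ℝ) :
    volume (Ioc a b ∩ Ico c d) = ENNReal.ofReal (min b d - max a c) := by
  refine le_antisymm ?_ ?_
  · calc volume (Ioc a b ∩ Ico c d) ≤ volume (Icc (max a c) (min b d)) :=
          measure_mono fun x hx => ⟨max_le hx.1.1.le hx.2.1, le_min hx.1.2 hx.2.2.le⟩
      _ = _ := Real.volume_Icc
  · calc ENNReal.ofReal (min b d - max a c) = volume (Ioo (max a c) (min b d)) :=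
          Real.volume_Ioo.symm
      _ ≤ volume (Ioc a b ∩ Ico c d) := measure_mono fun x hx => by
          simp only [mem_Ioo, max_lt_iff, lt_min_iff] at hx
          exact ⟨⟨hx.1.1, hx.2.1.le⟩, hx.1.2.le, hx.2.2⟩

theorem Jfun_apply (lam a b : ℝ) :
    Jfun lam (a, b) = max (min b lam - max 0 (lam - a)) 0 / (a * b) := by
  rw [Jfun, image_const_sub_Ioc, sub_zero, Real.volume_Ioc_inter_Ico, ENNReal.toReal_ofReal']

theorem measurable_Jfun (lam : ℝ) : Measurable (Jfun lam) := by
  have h : Jfun lam = fun p => max (min p.2 lam - max 0 (lam - p.1)) 0 / (p.1 * p.2) :=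
    funext fun p => Jfun_apply lam p.1 p.2
  rw [h]
  fun_prop

theorem Jfun_nonneg (lam : ℝ) {a b : ℝ} (ha : 0 < a) (hb : 0 < b) : 0 ≤ Jfun lam (a, b) :=
  div_nonneg ENNReal.toReal_nonneg (mul_pos ha hb).le

theorem Jfun_le_inv_sqrt_mul_inv_sqrt (lam : ℝ) {a b : ℝ} (ha : 0 < a) (hb : 0 < b) :
    Jfun lam (a, b) ≤ (√a)⁻¹ * (√b)⁻¹ := by
  have hmin : max (min b lam - max 0 (lam - a)) 0 ≤ min a b := by
    refine max_le (le_min ?_ ?_) (le_min ha.le hb.le)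
    · linarith [min_le_right b lam, le_max_right 0 (lam - a)]
    · linarith [min_le_left b lam, le_max_left 0 (lam - a)]
  have hsqrt : min a b ≤ √a * √b := by
    rw [← Real.sqrt_mul ha.le, Real.le_sqrt (le_min ha.le hb.le) (mul_pos ha hb).le, sq]
    exact mul_le_mul (min_le_left a b) (min_le_right a b) (le_min ha.le hb.le) ha.le
  rw [Jfun_apply, div_le_iff₀ (mul_pos ha hb)]
  calc _ ≤ √a * √b := hmin.trans hsqrt
    _ = (√a)⁻¹ * (√b)⁻¹ * (a * b) := by
        field_simp
        rw [Real.sq_sqrt ha.le, Real.sq_sqrt hb.le]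

theorem Jfun_pos {lam a b : ℝ} (hlam : 0 < lam) (ha : 0 < a) (hb : 0 < b) (hab : lam < a + b) :
    0 < Jfun lam (a, b) := by
  rw [Jfun_apply]
  refine div_pos (lt_max_of_lt_left ?_) (mul_pos ha hb)
  rw [sub_pos, max_lt_iff, lt_min_iff, lt_min_iff]
  exact ⟨⟨hb, hlam⟩, by linarith, by linarith⟩

theorem Jfun_eq_zero {lam a b : ℝ} (h : lam ≤ 0 ∨ a + b ≤ lam) : Jfun lam (a, b) = 0 := by
  rw [Jfun_apply, max_eq_right, zero_div]
  rcases h with h | h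
  · linarith [min_le_right b lam, le_max_left 0 (lam - a)]
  · linarith [min_le_left b lam, le_max_right 0 (lam - a)]

theorem Real.inv_sqrt_eq_rpow_neg_half {x : ℝ} (hx : 0 ≤ x) : (√x)⁻¹ = x ^ (-(1 / 2) : ℝ) := by
  rw [Real.rpow_neg hx, Real.sqrt_eq_rpow]

theorem integrableOn_inv_sqrt : IntegrableOn (fun x : ℝ => (√x)⁻¹) (Ioo 0 1) :=
  ((intervalIntegral.integrableOn_Ioo_rpow_iff one_pos).2 (by norm_num)).congr_fun
    (fun x hx => (Real.inv_sqrt_eq_rpow_neg_half hx.1.le).symm) measurableSet_Ioo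

theorem integral_inv_sqrt : ∫ x in Ioo (0 : ℝ) 1, (√x)⁻¹ = 2 := by
  rw [setIntegral_congr_fun measurableSet_Ioo fun x hx => Real.inv_sqrt_eq_rpow_neg_half hx.1.le,
    ← integral_Ioc_eq_integral_Ioo, ← intervalIntegral.integral_of_le zero_le_one,
    integral_rpow (Or.inl (by norm_num))]
  norm_num

theorem integrableOn_inv_sqrt_mul_inv_sqrt :
    IntegrableOn (fun p : ℝ × ℝ => (√p.1)⁻¹ * (√p.2)⁻¹) (Ioo 0 1 ×ˢ Ioo 0 1) := by
  rw [IntegrableOn, Measure.volume_eq_prod, ← Measure.prod_restrict]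
  exact integrableOn_inv_sqrt.mul_prod integrableOn_inv_sqrt

theorem integral_inv_sqrt_mul_inv_sqrt :
    ∫ p in Ioo (0 : ℝ) 1 ×ˢ Ioo 0 1, (√p.1)⁻¹ * (√p.2)⁻¹ = 4 := by
  rw [Measure.volume_eq_prod, ← Measure.prod_restrict,
    integral_prod_mul (fun x : ℝ => (√x)⁻¹) (fun x : ℝ => (√x)⁻¹), integral_inv_sqrt]
  norm_num

theorem integrableOn_Jfun (lam : ℝ) : IntegrableOn (Jfun lam) (Ioo 0 1 ×ˢ Ioo 0 1) := by
  refine integrableOn_inv_sqrt_mul_inv_sqrt.mono' (measurable_Jfun lam).aestronglyMeasurable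
    ((ae_restrict_iff' (measurableSet_Ioo.prod measurableSet_Ioo)).2 (.of_forall fun p hp => ?_))
  rw [Real.norm_of_nonneg (Jfun_nonneg lam hp.1.1 hp.2.1)]
  exact Jfun_le_inv_sqrt_mul_inv_sqrt lam hp.1.1 hp.2.1

theorem J_le_four (lam : ℝ) : J lam ≤ 4 := by
  rw [J, ← integral_inv_sqrt_mul_inv_sqrt]
  exact setIntegral_mono_on (integrableOn_Jfun lam) integrableOn_inv_sqrt_mul_inv_sqrt
    (measurableSet_Ioo.prod measurableSet_Ioo)
    fun p hp => Jfun_le_inv_sqrt_mul_inv_sqrt lam hp.1.1 hp.2.1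

theorem J_pos {lam : ℝ} (h0 : 0 < lam) (h2 : lam < 2) : 0 < J lam := by
  have hnonneg : 0 ≤ᵐ[volume.restrict (Ioo (0 : ℝ) 1 ×ˢ Ioo 0 1)] Jfun lam :=
    (ae_restrict_iff' (measurableSet_Ioo.prod measurableSet_Ioo)).2
      (.of_forall fun p hp => Jfun_nonneg lam hp.1.1 hp.2.1)
  rw [J, setIntegral_pos_iff_support_of_nonneg_ae hnonneg (integrableOn_Jfun lam)]
  set U := {p : ℝ × ℝ | lam < p.1 + p.2} ∩ Ioo 0 1 ×ˢ Ioo 0 1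
  have hU : IsOpen U :=
    (isOpen_lt continuous_const (by fun_prop)).inter (isOpen_Ioo.prod isOpen_Ioo)
  have hmem : ((lam + 2) / 4, (lam + 2) / 4) ∈ U := by
    refine ⟨show lam < _ by linarith, ⟨?_, ?_⟩, ?_, ?_⟩ <;> linarith
  refine (hU.measure_pos volume ⟨_, hmem⟩).trans_le (measure_mono ?_)
  rintro p ⟨hsum, hp⟩
  exact ⟨(Jfun_pos h0 hp.1.1 hp.2.1 hsum).ne', hp⟩

theorem J_eq_zero {lam : ℝ} (h : lam ∉ Ioo (0 : ℝ) 2) : J lam = 0 := by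
  refine setIntegral_eq_zero_of_forall_eq_zero fun p hp => Jfun_eq_zero ?_
  rw [mem_Ioo, not_and_or, not_lt, not_lt] at h
  exact h.imp_right fun h2 => by linarith [hp.1.2, hp.2.2]

theorem J_integrable_pos_le (lam : ℝ) :
    ((0 < lam ∧ lam < 2) →
      IntegrableOn (Jfun lam) ((Set.Ioo (0:ℝ) 1) ×ˢ (Set.Ioo (0:ℝ) 1)) volume ∧
      0 < J lam ∧ J lam ≤ 4) ∧
    (lam ∉ Set.Ioo (0:ℝ) 2 → J lam = 0) :=
  ⟨fun ⟨h0, h2⟩ => ⟨integrableOn_Jfun lam, J_pos h0 h2, J_le_four lam⟩, J_eq_zero⟩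
end

section
/- Define $J(\lambda) = \int_0^1 \int_0^1 \frac{1}{\alpha\beta} \mu\big((0,\beta] \cap (\lambda - (0,\alpha])\big)\, d\alpha\, d\beta$. Then $J(1) = 2 - \zeta(2)$. -/
open MeasureTheory

/-!
For `α, β ∈ (0, 1)` the two intervals `(0, β]` and `[1 - α, 1)` overlap in `[1 - α, β]`, so the
integrand of `J 1` is `(α + β - 1)⁺ / (α β)`. Integrating out `β` leaves
`1 + (1 - α) log (1 - α) / α`; after `u = 1 - α`, expanding `u / (1 - u)` as a geometric series
and using `∫₀¹ uⁿ⁺¹ log u = -1 / (n + 2)²` gives `∫₀¹ u log u / (1 - u) = 1 - ζ(2)`.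
-/

open Set Real

lemma volume_Ioc_inter_image_const_sub_Ioc {lam a c : ℝ} (ha : a < lam) (hc : c < lam) :
    volume (Ioc 0 c ∩ (fun t => lam - t) '' Ioc 0 a) = ENNReal.ofReal (a + c - lam) := by
  have hIcc : Ioc 0 c ∩ Ico (lam - a) lam = Icc (lam - a) c := by
    ext x
    simp only [mem_inter_iff, mem_Ioc, mem_Ico, mem_Icc]
    constructor
    · rintro ⟨⟨-, hxc⟩, hx, -⟩
      exact ⟨hx, hxc⟩
    · rintro ⟨hx, hxc⟩
      exact ⟨⟨by linarith, hxc⟩, hx, by linarith⟩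
  rw [image_const_sub_Ioc, sub_zero, hIcc, volume_Icc]
  ring_nf

lemma Jfun_of_lt {lam : ℝ} {p : ℝ × ℝ} (h₁ : p.1 < lam) (h₂ : p.2 < lam) :
    Jfun lam p = max (p.1 + p.2 - lam) 0 / (p.1 * p.2) := by
  rw [Jfun, volume_Ioc_inter_image_const_sub_Ioc h₁ h₂, ENNReal.toReal_ofReal']

lemma max_add_sub_one_div_mul_mem_Icc {a c : ℝ} (ha : a ∈ Ioo 0 1) (hc : c ∈ Ioo 0 1) :
    max (a + c - 1) 0 / (a * c) ∈ Icc 0 1 := by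
  have hac : 0 < a * c := mul_pos ha.1 hc.1
  refine ⟨by positivity, (div_le_one hac).2 (max_le ?_ hac.le)⟩
  nlinarith [ha.2, hc.2]

lemma integrableOn_max_add_sub_one_div_mul :
    IntegrableOn (fun p : ℝ × ℝ => max (p.1 + p.2 - 1) 0 / (p.1 * p.2))
      (Ioo 0 1 ×ˢ Ioo 0 1) (volume.prod volume) := by
  refine Measure.integrableOn_of_bounded (M := 1) ?_
    (Measurable.aestronglyMeasurable (by fun_prop)) ?_
  · simp [Measure.prod_prod]
  · refine (ae_restrict_iff' (measurableSet_Ioo.prod measurableSet_Ioo)).2 (.of_forall ?_)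
    rintro ⟨a, c⟩ ⟨ha, hc⟩
    have h := max_add_sub_one_div_mul_mem_Icc ha hc
    rw [Real.norm_of_nonneg h.1]
    exact h.2

lemma integral_max_add_sub_one_div_mul {a : ℝ} (ha : a ∈ Ioo 0 1) :
    ∫ c in Ioo 0 1, max (a + c - 1) 0 / (a * c) = 1 + (1 - a) * log (1 - a) / a := by
  obtain ⟨ha₀, ha₁⟩ := ha
  have hvanish : ∀ c ∈ Ioo 0 1 \ Ioo (1 - a) 1, max (a + c - 1) 0 / (a * c) = 0 := by
    rintro c ⟨⟨-, hc⟩, hc'⟩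
    have : a + c - 1 ≤ 0 := by
      by_contra! h
      exact hc' ⟨by linarith, hc⟩
    rw [max_eq_right this, zero_div]
  have hderiv : ∀ c ∈ uIcc (1 - a) 1,
      HasDerivAt (fun c => c / a + (a - 1) / a * log c) ((a + c - 1) / (a * c)) c := by
    intro c hc
    rw [uIcc_of_le (by linarith)] at hc
    have hc₀ : c ≠ 0 := by linarith [hc.1]
    refine (((hasDerivAt_id c).div_const a).add
      ((hasDerivAt_log hc₀).const_mul ((a - 1) / a))).congr_deriv ?_
    field_simp
    ring
  have hcont : ContinuousOn (fun c => (a + c - 1) / (a * c)) (uIcc (1 - a) 1) := by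
    refine ContinuousOn.div (by fun_prop) (by fun_prop) fun c hc => ?_
    rw [uIcc_of_le (by linarith)] at hc
    have : 0 < c := by linarith [hc.1]
    positivity
  rw [setIntegral_eq_of_subset_of_forall_sdiff_eq_zero measurableSet_Ioo
      (Ioo_subset_Ioo_left (by linarith)) hvanish, ← integral_Ioc_eq_integral_Ioo,
    ← intervalIntegral.integral_of_le (by linarith)]
  have hpos : EqOn (fun c => max (a + c - 1) 0 / (a * c)) (fun c => (a + c - 1) / (a * c))
      (uIcc (1 - a) 1) := by
    intro c hc
    rw [uIcc_of_le (by linarith)] at hc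
    simp only [max_eq_left (by linarith [hc.1] : 0 ≤ a + c - 1)]
  rw [intervalIntegral.integral_congr hpos,
    intervalIntegral.integral_eq_sub_of_hasDerivAt hderiv hcont.intervalIntegrable, log_one]
  field_simp
  ring

lemma integral_pow_mul_mul_log (n : ℕ) :
    ∫ u in 0..1, u ^ n * (u * log u) = -(1 / ((n : ℝ) + 2) ^ 2) := by
  have hn : (n : ℝ) + 2 ≠ 0 := by positivity
  have hderiv : ∀ u ∈ Ioo (0 : ℝ) 1, HasDerivAt
      (fun u => u ^ (n + 1) * (u * log u) / (n + 2) - u ^ (n + 2) / (n + 2) ^ 2)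
      (u ^ n * (u * log u)) u := by
    intro u hu
    refine ((((hasDerivAt_pow (n + 1) u).mul (hasDerivAt_mul_log hu.1.ne')).div_const _).sub
      ((hasDerivAt_pow (n + 2) u).div_const _)).congr_deriv ?_
    push_cast
    field_simp
    ring
  rw [intervalIntegral.integral_eq_sub_of_hasDerivAt_of_le zero_le_one (by fun_prop) hderiv
    ((by fun_prop : Continuous fun u : ℝ => u ^ n * (u * log u)).intervalIntegrable 0 1)]
  simp only [log_one]
  ring

lemma hasSum_one_div_add_two_sq :
    HasSum (fun n : ℕ => 1 / ((n : ℝ) + 2) ^ 2) (π ^ 2 / 6 - 1) := by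
  have h := (hasSum_nat_add_iff' (f := fun n : ℕ => (1 : ℝ) / (n : ℝ) ^ 2) 2).2 hasSum_zeta_two
  norm_num [Finset.sum_range_succ] at h
  simpa only [one_div] using h

lemma integral_mul_log_div_one_sub :
    ∫ u in 0..1, u * log u / (1 - u) = 1 - π ^ 2 / 6 := by
  set F : ℕ → ℝ → ℝ := fun n u => u ^ n * (u * log u) with hF
  have hF_integral (n : ℕ) : ∫ u in Ioo 0 1, F n u = -(1 / ((n : ℝ) + 2) ^ 2) := by
    rw [← integral_Ioc_eq_integral_Ioo, ← intervalIntegral.integral_of_le zero_le_one,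
      integral_pow_mul_mul_log]
  have hF_int (n : ℕ) : Integrable (F n) (volume.restrict (Ioo 0 1)) :=
    ((by fun_prop : Continuous (F n)).integrableOn_Icc (a := 0) (b := 1)).mono_set
      Ioo_subset_Icc_self
  have hF_norm (n : ℕ) : ∫ u in Ioo 0 1, ‖F n u‖ = 1 / ((n : ℝ) + 2) ^ 2 := by
    have hnonpos : ∀ u ∈ Ioo (0 : ℝ) 1, ‖F n u‖ = -F n u := fun u hu =>
      norm_of_nonpos (mul_nonpos_of_nonneg_of_nonpos (pow_nonneg hu.1.le n)
        (mul_nonpos_of_nonneg_of_nonpos hu.1.le (log_nonpos hu.1.le hu.2.le)))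
    rw [setIntegral_congr_fun measurableSet_Ioo hnonpos, integral_neg, hF_integral, neg_neg]
  have hgeom : EqOn (fun u => ∑' n, F n u) (fun u => u * log u / (1 - u)) (Ioo 0 1) :=
    fun u hu => by
      simp only [hF, tsum_mul_right, tsum_geometric_of_lt_one hu.1.le hu.2, inv_mul_eq_div]
  have hsum := hasSum_integral_of_summable_integral_norm hF_int
    (by simpa only [hF_norm] using hasSum_one_div_add_two_sq.summable)
  simp only [hF_integral, setIntegral_congr_fun measurableSet_Ioo hgeom] at hsum
  rw [intervalIntegral.integral_of_le zero_le_one, integral_Ioc_eq_integral_Ioo,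
    hsum.unique hasSum_one_div_add_two_sq.neg]
  ring

lemma intervalIntegrable_mul_log_div_one_sub :
    IntervalIntegrable (fun u => u * log u / (1 - u)) volume 0 1 := by
  rw [intervalIntegrable_iff_integrableOn_Ioo_of_le zero_le_one]
  refine Measure.integrableOn_of_bounded (M := 1) (by simp)
    (Measurable.aestronglyMeasurable (by fun_prop)) ?_
  refine (ae_restrict_iff' measurableSet_Ioo).2 (.of_forall fun u hu => ?_)
  have h1u : 0 < 1 - u := sub_pos.2 hu.2
  have hlower : u - 1 ≤ u * log u := calc
    u - 1 = u * (1 - u⁻¹) := by rw [mul_sub, mul_inv_cancel₀ hu.1.ne', mul_one]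
    _ ≤ u * log u := mul_le_mul_of_nonneg_left (one_sub_inv_le_log_of_pos hu.1) hu.1.le
  have hupper : u * log u ≤ 0 :=
    mul_nonpos_of_nonneg_of_nonpos hu.1.le (log_nonpos hu.1.le hu.2.le)
  rw [norm_div, norm_of_nonneg h1u.le, div_le_one h1u, norm_of_nonpos hupper]
  linarith

lemma integral_one_add_one_sub_mul_log_one_sub_div :
    ∫ a in 0..1, (1 + (1 - a) * log (1 - a) / a) = 2 - π ^ 2 / 6 := by
  have hsubst := intervalIntegral.integral_comp_sub_left
    (fun u => u * log u / (1 - u)) (a := 0) (b := 1) 1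
  have hint := (intervalIntegrable_mul_log_div_one_sub.comp_sub_left 1).symm
  simp only [sub_sub_cancel, sub_zero, sub_self] at hsubst hint
  rw [intervalIntegral.integral_add intervalIntegrable_const hint, hsubst,
    integral_mul_log_div_one_sub, intervalIntegral.integral_const]
  norm_num
  ring

theorem J_one : J 1 = 2 - Real.pi ^ 2 / 6 := by
  have hJfun : EqOn (Jfun 1) (fun p => max (p.1 + p.2 - 1) 0 / (p.1 * p.2))
      (Ioo 0 1 ×ˢ Ioo 0 1) := fun p hp => Jfun_of_lt hp.1.2 hp.2.2
  rw [J, setIntegral_congr_fun (measurableSet_Ioo.prod measurableSet_Ioo) hJfun,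
    Measure.volume_eq_prod, setIntegral_prod _ integrableOn_max_add_sub_one_div_mul,
    setIntegral_congr_fun measurableSet_Ioo fun a ha => integral_max_add_sub_one_div_mul ha,
    ← integral_Ioc_eq_integral_Ioo, ← intervalIntegral.integral_of_le zero_le_one]
  exact integral_one_add_one_sub_mul_log_one_sub_div
end

section
/- Define $J(\lambda) = \int_0^1 \int_0^1 \frac{1}{\alpha\beta} \mu\big((0,\beta] \cap (\lambda - (0,\alpha])\big)\, d\alpha\, d\beta$. Then for all real $\lambda$ with $1 < \lambda < 2$, one has $J(\lambda) = 2 + 2(\lambda-1)(\log(\lambda-1) - 1) + \lambda\big(\zeta(2) - \log^2(\lambda) - 2\mathrm{Li}_2(1/\lambda)\big)$. -/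
open MeasureTheory

noncomputable def Li2 (x : ℝ) : ℝ := ∑' n : ℕ, x ^ (n + 1) / ((n : ℝ) + 1) ^ 2

/-!
For `1 < λ < 2` and `a, b ∈ (0, 1)` the set `(0, b] ∩ (λ - (0, a])` is the interval `[λ - a, b]`, so
`J λ = ∫∫ (a + b - λ)⁺ / (a b)`. The inner integral is elementary, `(1 - c + c log c) / a` with
`c = λ - a`, and vanishes for `a ≤ λ - 1`. The outer one has an antiderivative involving
`Li₂ (a / λ)`; evaluating it between `λ - 1` and `1` produces `Li₂ (1 / λ)` and `Li₂ (1 - 1 / λ)`,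
and the reflection formula `Li₂ x + Li₂ (1 - x) + log x log (1 - x) = π² / 6` (the left side has
derivative zero and tends to `π² / 6` as `x → 0⁺`) eliminates the latter.
-/

open Real Set Filter Topology

lemma hasSum_one_div_add_one_sq :
    HasSum (fun n : ℕ => 1 / ((n : ℝ) + 1) ^ 2) (π ^ 2 / 6) := by
  simpa using (hasSum_nat_add_iff' 1).mpr hasSum_zeta_two

lemma Li2_zero : Li2 0 = 0 := by simp [Li2]

lemma Li2_one : Li2 1 = π ^ 2 / 6 := by
  simpa [Li2] using hasSum_one_div_add_one_sq.tsum_eq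

lemma continuousOn_Li2 : ContinuousOn Li2 (Icc (-1) 1) := by
  refine continuousOn_tsum (fun n => (continuousOn_pow _).div_const _)
    hasSum_one_div_add_one_sq.summable fun n x hx => ?_
  rw [norm_div, norm_pow, norm_pow, Real.norm_of_nonneg (by positivity : (0:ℝ) ≤ n + 1)]
  gcongr
  exact pow_le_one₀ (norm_nonneg x) (abs_le.2 hx)

lemma hasSum_pow_div_add_one {x : ℝ} (hx : |x| < 1) (hx0 : x ≠ 0) :
    HasSum (fun n : ℕ => x ^ n / ((n : ℝ) + 1)) (-log (1 - x) / x) := by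
  refine ((hasSum_pow_div_log_of_abs_lt_one hx).div_const x).congr_fun fun n => ?_
  field_simp
  ring

lemma hasDerivAt_Li2 {x : ℝ} (hx : |x| < 1) (hx0 : x ≠ 0) :
    HasDerivAt Li2 (-log (1 - x) / x) x := by
  obtain ⟨r, hxr, hr1⟩ := exists_between hx
  have hr0 : 0 < r := (abs_nonneg x).trans_lt hxr
  rw [← (hasSum_pow_div_add_one hx hx0).tsum_eq]
  refine hasDerivAt_tsum_of_isPreconnected (g := fun (n : ℕ) y => y ^ (n + 1) / ((n : ℝ) + 1) ^ 2)
    (g' := fun n y => y ^ n / ((n : ℝ) + 1)) (summable_geometric_of_lt_one hr0.le hr1)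
    isOpen_Ioo isPreconnected_Ioo (fun n y _ => ?_) (fun n y hy => ?_) (y₀ := 0)
    ⟨neg_neg_of_pos hr0, hr0⟩ ?_ (abs_lt.1 hxr)
  · refine ((hasDerivAt_pow (n + 1) y).div_const (((n : ℝ) + 1) ^ 2)).congr_deriv ?_
    rw [Nat.add_sub_cancel, Nat.cast_add_one]
    field_simp
  · rw [norm_div, norm_pow, Real.norm_of_nonneg (by positivity : (0:ℝ) ≤ n + 1)]
    calc ‖y‖ ^ n / ((n : ℝ) + 1) ≤ ‖y‖ ^ n := div_le_self (by positivity) (by simp)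
      _ ≤ r ^ n := by gcongr; exact abs_le.2 ⟨hy.1.le, hy.2.le⟩
  · simp

lemma hasDerivAt_Li2_add_Li2_one_sub {x : ℝ} (hx : x ∈ Ioo (0:ℝ) 1) :
    HasDerivAt (fun y => Li2 y + Li2 (1 - y) + log y * log (1 - y)) 0 x := by
  obtain ⟨hx0, hx1⟩ := hx
  have h1x : 0 < 1 - x := sub_pos.2 hx1
  have hsub : HasDerivAt (fun y : ℝ => 1 - y) (-1) x := by
    simpa using (hasDerivAt_id x).const_sub 1
  have d1 := hasDerivAt_Li2 (abs_lt.2 ⟨by linarith, hx1⟩) hx0.ne'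
  have d2 := (hasDerivAt_Li2 (abs_lt.2 ⟨by linarith, by linarith⟩) h1x.ne').comp x hsub
  have d3 := (hasDerivAt_log hx0.ne').mul ((hasDerivAt_log h1x.ne').comp x hsub)
  refine ((d1.add d2).add d3).congr_deriv ?_
  simp only [Function.comp_def, sub_sub_cancel]
  field_simp
  ring

lemma tendsto_log_mul_log_one_sub_nhdsGT_zero :
    Tendsto (fun x => log x * log (1 - x)) (𝓝[>] 0) (𝓝 0) := by
  have hxlog : Tendsto (fun x => log x * x) (𝓝[>] 0) (𝓝 0) := by
    simpa using tendsto_log_mul_rpow_nhdsGT_zero one_pos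
  -- a difference quotient of `log (1 - x)` at `0`
  have hslope : Tendsto (fun x => x⁻¹ * log (1 - x)) (𝓝[>] 0) (𝓝 (-1)) := by
    have h := (((hasDerivAt_id (0:ℝ)).const_sub 1).log (by norm_num)).tendsto_slope_zero_right
    simpa using h
  have hprod := hxlog.mul hslope
  rw [zero_mul] at hprod
  refine hprod.congr' ?_
  filter_upwards [self_mem_nhdsWithin] with x (hx : 0 < x)
  field_simp

lemma Li2_add_Li2_one_sub {x : ℝ} (hx : x ∈ Ioo (0:ℝ) 1) :
    Li2 x + Li2 (1 - x) + log x * log (1 - x) = π ^ 2 / 6 := by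
  obtain ⟨C, hC⟩ := isOpen_Ioo.exists_is_const_of_deriv_eq_zero isPreconnected_Ioo
    (fun y hy => (hasDerivAt_Li2_add_Li2_one_sub hy).differentiableAt.differentiableWithinAt)
    (fun y hy => (hasDerivAt_Li2_add_Li2_one_sub hy).deriv)
  have hLi2_zero : Tendsto Li2 (𝓝[>] 0) (𝓝 0) := by
    have h := (continuousOn_Li2.continuousAt
      (Icc_mem_nhds (by norm_num : (-1:ℝ) < 0) zero_lt_one)).tendsto
    rw [Li2_zero] at h
    exact h.mono_left nhdsWithin_le_nhds
  have hLi2_one : Tendsto (fun x => Li2 (1 - x)) (𝓝[>] 0) (𝓝 (π ^ 2 / 6)) := by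
    rw [← Li2_one]
    refine (continuousOn_Li2 1 (by norm_num)).tendsto.comp
      (tendsto_nhdsWithin_of_tendsto_nhds_of_eventually_within _ ?_ ?_)
    · exact ((continuous_const.sub continuous_id).tendsto' 0 1 (by simp)).mono_left
        nhdsWithin_le_nhds
    · filter_upwards [Ioo_mem_nhdsGT (zero_lt_one' ℝ)] with y hy
      exact ⟨by linarith [hy.2], by linarith [hy.1]⟩
  have hlim := (hLi2_zero.add hLi2_one).add tendsto_log_mul_log_one_sub_nhdsGT_zero
  rw [zero_add, add_zero] at hlim
  have hconst : Tendsto (fun _ : ℝ => C) (𝓝[>] 0) (𝓝 (π ^ 2 / 6)) :=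
    hlim.congr' (eventually_of_mem (Ioo_mem_nhdsGT (zero_lt_one' ℝ)) hC)
  rw [hC x hx, tendsto_nhds_unique tendsto_const_nhds hconst]

lemma volume_Ioc_inter_image_const_sub {lam a b : ℝ} (ha : a < lam) (hb : b < lam) :
    volume (Ioc 0 b ∩ (fun t => lam - t) '' Ioc 0 a) = ENNReal.ofReal (a + b - lam) := by
  have hinter : Ioc 0 b ∩ (fun t => lam - t) '' Ioc 0 a = Icc (lam - a) b := by
    rw [image_const_sub_Ioc, sub_zero]
    ext t
    simp only [mem_inter_iff, mem_Ioc, mem_Ico, mem_Icc]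
    constructor
    · rintro ⟨⟨_, htb⟩, hta, _⟩
      exact ⟨hta, htb⟩
    · rintro ⟨hta, htb⟩
      exact ⟨⟨by linarith, htb⟩, hta, by linarith⟩
  rw [hinter, Real.volume_Icc]
  ring_nf

section

variable {lam : ℝ}

lemma Jfun_eq_max_div_mul {p : ℝ × ℝ} (h1 : p.1 < lam) (h2 : p.2 < lam) :
    Jfun lam p = max (p.1 + p.2 - lam) 0 / (p.1 * p.2) := by
  rw [Jfun, volume_Ioc_inter_image_const_sub h1 h2, ENNReal.toReal_ofReal']

lemma integrableOn_max_add_sub_div_mul (hlam : 1 < lam) :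
    IntegrableOn (fun p : ℝ × ℝ => max (p.1 + p.2 - lam) 0 / (p.1 * p.2))
      (Ioo 0 1 ×ˢ Ioo 0 1) := by
  have hmeas : Measurable (fun p : ℝ × ℝ => max (p.1 + p.2 - lam) 0 / (p.1 * p.2)) := by
    fun_prop
  refine Measure.integrableOn_of_bounded (M := 1 / (lam - 1) ^ 2) ?_ hmeas.aestronglyMeasurable ?_
  · rw [Measure.volume_eq_prod, Measure.prod_prod, Real.volume_Ioo]
    simp
  rw [ae_restrict_iff' (measurableSet_Ioo.prod measurableSet_Ioo)]
  refine ae_of_all _ fun ⟨a, b⟩ ⟨⟨ha0, ha1⟩, hb0, hb1⟩ => ?_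
  rw [Real.norm_of_nonneg (by positivity)]
  rcases le_or_gt (a + b) lam with h | h
  · rw [max_eq_right (by linarith), zero_div]
    positivity
  -- the integrand is nonzero only where both `a` and `b` exceed `lam - 1`
  rw [max_eq_left (by linarith)]
  exact div_le_div₀ zero_le_one (by linarith) (by nlinarith) (by nlinarith)

lemma J_eq_iteratedIntegral (hlam : 1 < lam) :
    J lam = ∫ a in Ioo 0 1, ∫ b in Ioo 0 1, max (a + b - lam) 0 / (a * b) := by
  rw [J, setIntegral_congr_fun (measurableSet_Ioo.prod measurableSet_Ioo)
    fun p hp => Jfun_eq_max_div_mul (by linarith [hp.1.2]) (by linarith [hp.2.2])]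
  have h := integrableOn_max_add_sub_div_mul hlam
  rw [Measure.volume_eq_prod] at h ⊢
  exact setIntegral_prod _ h

lemma integral_max_sub_div_self {c : ℝ} (hc0 : 0 < c) (hc1 : c ≤ 1) :
    ∫ b in Ioo 0 1, max (b - c) 0 / b = 1 - c + c * log c := by
  rw [setIntegral_eq_of_subset_of_forall_sdiff_eq_zero measurableSet_Ioo
      (Ioo_subset_Ioo_left hc0.le) fun b hb => ?_]
  · rw [setIntegral_congr_fun measurableSet_Ioo (g := fun b => 1 - c * b⁻¹) fun b hb => ?_,
      ← integral_Ioc_eq_integral_Ioo, ← intervalIntegral.integral_of_le hc1,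
      intervalIntegral.integral_sub intervalIntegrable_const
        ((intervalIntegrable_inv_iff.2 (.inr (notMem_uIcc_of_lt hc0 one_pos))).const_mul c),
      intervalIntegral.integral_const_mul, integral_inv_of_pos hc0 one_pos]
    · simp
    · have hb0 : 0 < b := hc0.trans hb.1
      rw [max_eq_left (by linarith [hb.1])]
      field_simp
  · rw [max_eq_right (by linarith [not_lt.1 fun h => hb.2 ⟨h, hb.1.2⟩]), zero_div]

lemma integral_max_add_sub_div_mul {a : ℝ} (hal : a < lam) (hla : lam - 1 ≤ a) :
    ∫ b in Ioo 0 1, max (a + b - lam) 0 / (a * b)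
      = (1 - (lam - a) + (lam - a) * log (lam - a)) / a := by
  have hsplit : ∀ b, max (a + b - lam) 0 / (a * b) = max (b - (lam - a)) 0 / b / a := fun b => by
    rw [div_div, mul_comm a b, sub_sub_eq_add_sub, add_comm b a]
  simp_rw [hsplit]
  rw [integral_div, integral_max_sub_div_self (sub_pos.2 hal) (by linarith)]

-- Split `log (lam - a) = log lam + log (1 - a / lam)` and use `Li2' x = -log (1 - x) / x`.
noncomputable def JPrimitive (lam a : ℝ) : ℝ :=
  a + (1 - lam) * log a + lam * (log lam * log a - Li2 (a / lam))
    + (lam - a) * log (lam - a) - (lam - a)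

lemma hasDerivAt_JPrimitive {a : ℝ} (ha0 : 0 < a) (hal : a < lam) :
    HasDerivAt (JPrimitive lam) ((1 - (lam - a) + (lam - a) * log (lam - a)) / a) a := by
  have hlam0 : 0 < lam := ha0.trans hal
  have hla0 : 0 < lam - a := sub_pos.2 hal
  have hdiv : HasDerivAt (fun y : ℝ => y / lam) (1 / lam) a := by
    simpa using (hasDerivAt_id a).div_const lam
  have hsub : HasDerivAt (fun y : ℝ => lam - y) (-1) a := by
    simpa using (hasDerivAt_id a).const_sub lam
  have hlog := hasDerivAt_log ha0.ne'
  have hLi2 := (hasDerivAt_Li2 (abs_lt.2 ⟨by linarith [div_pos ha0 hlam0],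
    (div_lt_one hlam0).2 hal⟩) (div_pos ha0 hlam0).ne').comp a hdiv
  have hmullog := (hasDerivAt_mul_log hla0.ne').comp a hsub
  refine ((((hasDerivAt_id a).add (hlog.const_mul (1 - lam))).add
    (((hlog.const_mul (log lam)).sub hLi2).const_mul lam)).add hmullog |>.sub hsub).congr_deriv ?_
  rw [show 1 - a / lam = (lam - a) / lam by field_simp, log_div hla0.ne' hlam0.ne']
  field_simp
  ring

lemma integral_integral_max_add_sub_div_mul (h1 : 1 < lam) (h2 : lam < 2) :
    ∫ a in Ioo 0 1, ∫ b in Ioo 0 1, max (a + b - lam) 0 / (a * b)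
      = JPrimitive lam 1 - JPrimitive lam (lam - 1) := by
  have hvanish : ∀ a ∈ Ioo (0:ℝ) 1 \ Ioo (lam - 1) 1,
      ∫ b in Ioo 0 1, max (a + b - lam) 0 / (a * b) = 0 := fun a ha => by
    have hal : a ≤ lam - 1 := not_lt.1 fun h => ha.2 ⟨h, ha.1.2⟩
    refine setIntegral_eq_zero_of_forall_eq_zero fun b hb => ?_
    rw [max_eq_right (by linarith [hb.2]), zero_div]
  rw [setIntegral_eq_of_subset_of_forall_sdiff_eq_zero measurableSet_Ioo
      (Ioo_subset_Ioo_left (by linarith)) hvanish,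
    setIntegral_congr_fun measurableSet_Ioo fun a ha =>
      integral_max_add_sub_div_mul (by linarith [ha.2]) ha.1.le,
    ← integral_Ioc_eq_integral_Ioo, ← intervalIntegral.integral_of_le (by linarith)]
  have hIcc : ∀ a ∈ uIcc (lam - 1) 1, 0 < a ∧ a < lam := fun a ha => by
    rw [uIcc_of_le (by linarith)] at ha
    exact ⟨by linarith [ha.1], by linarith [ha.2]⟩
  refine intervalIntegral.integral_eq_sub_of_hasDerivAt
    (fun a ha => hasDerivAt_JPrimitive (hIcc a ha).1 (hIcc a ha).2)
    (ContinuousOn.intervalIntegrable ?_)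
  refine ContinuousOn.div ?_ continuousOn_id fun a ha => (hIcc a ha).1.ne'
  fun_prop (disch := exact fun a ha => (sub_pos.2 (hIcc a ha).2).ne')

end

theorem J_formula_gt_one (lam : ℝ) (h1 : 1 < lam) (h2 : lam < 2) :
    J lam = 2 + 2 * (lam - 1) * (Real.log (lam - 1) - 1)
      + lam * (Real.pi ^ 2 / 6 - (Real.log lam) ^ 2 - 2 * Li2 (1 / lam)) := by
  have hlam0 : 0 < lam := by linarith
  have hrefl := Li2_add_Li2_one_sub (x := 1 / lam)
    ⟨by positivity, (div_lt_one hlam0).2 h1⟩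
  rw [show 1 - 1 / lam = (lam - 1) / lam by field_simp, log_div one_ne_zero hlam0.ne',
    log_div (by linarith) hlam0.ne', log_one] at hrefl
  rw [J_eq_iteratedIntegral h1, integral_integral_max_add_sub_div_mul h1 h2, JPrimitive,
    JPrimitive, sub_sub_cancel, log_one]
  linear_combination lam * hrefl
end

section
/- Define $K(\lambda) = \int_0^1 \int_0^1 \frac{1}{\alpha\beta} \mu\big([\lambda, \beta+\lambda] \cap [0,\alpha]\big)\, d\alpha\, d\beta$. Then $K(0) = 2$, $K(\lambda) = K(-\lambda)$ for all real $\lambda$, and $K(\lambda) = 0$ whenever $|\lambda| \geq 1$. -/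
open MeasureTheory

noncomputable def Kfun (lam : ℝ) : ℝ × ℝ → ℝ := fun p =>
  (volume (Set.Icc lam (p.2 + lam) ∩ Set.Icc (0:ℝ) p.1)).toReal / (p.1 * p.2)

noncomputable def K (lam : ℝ) : ℝ :=
  ∫ p in (Set.Ioo (0:ℝ) 1) ×ˢ (Set.Ioo (0:ℝ) 1), Kfun lam p

/-!
At `λ = 0` the integrand is `1 / max α β`; its inner integral over `β` is `1 - log α`, and
`∫₀¹ (1 - log α) dα = 2`. Translating by `λ` and swapping `α, β` turns `K (-λ)` into `K λ`,
and for `|λ| ≥ 1` the intervals `[λ, β + λ]` and `[0, α]` are disjoint on the open unit square.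
-/

open Real Set

lemma Kfun_neg_apply (lam : ℝ) (p : ℝ × ℝ) : Kfun (-lam) p = Kfun lam p.swap := by
  have hshift : (· + lam) ⁻¹' (Icc lam (p.1 + lam) ∩ Icc 0 p.2) =
      Icc (-lam) (p.2 + -lam) ∩ Icc 0 p.1 := by
    rw [preimage_inter, preimage_add_const_Icc, preimage_add_const_Icc, inter_comm]
    simp [sub_eq_add_neg]
  simp only [Kfun, Prod.fst_swap, Prod.snd_swap, ← hshift, measure_preimage_add_right, mul_comm]

lemma K_neg (lam : ℝ) : K (-lam) = K lam := by
  have hswap : MeasurePreserving (Prod.swap : ℝ × ℝ → ℝ × ℝ) := by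
    rw [Measure.volume_eq_prod]
    exact Measure.measurePreserving_swap
  simp only [K, Kfun_neg_apply]
  rw [← hswap.setIntegral_preimage_emb MeasurableEquiv.prodComm.measurableEmbedding,
    preimage_swap_prod]
  simp only [Prod.swap_swap]

lemma Kfun_eq_zero_of_one_le_abs {lam : ℝ} (h : 1 ≤ |lam|) {p : ℝ × ℝ} (ha : p.1 < 1)
    (hb : p.2 < 1) : Kfun lam p = 0 := by
  have hempty : Icc lam (p.2 + lam) ∩ Icc 0 p.1 = ∅ := by
    refine eq_empty_of_forall_notMem fun x ⟨⟨hlx, hxl⟩, ⟨h0x, hxa⟩⟩ => ?_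
    rcases le_abs'.1 h with h | h <;> linarith
  simp [Kfun, hempty]

lemma K_eq_zero_of_one_le_abs {lam : ℝ} (h : 1 ≤ |lam|) : K lam = 0 :=
  setIntegral_eq_zero_of_forall_eq_zero fun _ hp => Kfun_eq_zero_of_one_le_abs h hp.1.2 hp.2.2

lemma Kfun_zero_apply {a b : ℝ} (ha : 0 < a) (hb : 0 < b) : Kfun 0 (a, b) = (max a b)⁻¹ := by
  have hmin : 0 < min b a := lt_min hb ha
  rw [Kfun, add_zero, Icc_inter_Icc, max_self, volume_Icc, sub_zero,
    ENNReal.toReal_ofReal hmin.le, min_comm, ← min_mul_max a b]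
  field_simp [hmin.ne']

lemma continuous_inv_max {a : ℝ} (ha : 0 < a) : Continuous fun b : ℝ => (max a b)⁻¹ :=
  (continuous_const.max continuous_id).inv₀ fun b => (ha.trans_le (le_max_left a b)).ne'

lemma integral_inv_max {a c : ℝ} (ha : 0 < a) (hac : a ≤ c) :
    ∫ b in 0..c, (max a b)⁻¹ = 1 + log (c / a) := by
  have hint := (continuous_inv_max ha).intervalIntegrable (μ := volume)
  rw [← intervalIntegral.integral_add_adjacent_intervals (b := a) (hint _ _) (hint _ _)]
  have hlow : ∫ b in 0..a, (max a b)⁻¹ = 1 := by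
    rw [intervalIntegral.integral_congr (g := fun _ => a⁻¹), intervalIntegral.integral_const,
      sub_zero, smul_eq_mul, mul_inv_cancel₀ ha.ne']
    intro b hb
    rw [uIcc_of_le ha.le] at hb
    simp [max_eq_left hb.2]
  have hhigh : ∫ b in a..c, (max a b)⁻¹ = log (c / a) := by
    rw [intervalIntegral.integral_congr (g := fun b => b⁻¹),
      integral_inv_of_pos ha (ha.trans_le hac)]
    intro b hb
    rw [uIcc_of_le hac] at hb
    simp [max_eq_right hb.1]
  rw [hlow, hhigh]

lemma integral_one_sub_log : ∫ a in 0..1, (1 - log a) = 2 := by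
  rw [intervalIntegral.integral_sub intervalIntegrable_const
    intervalIntegral.intervalIntegrable_log', integral_log]
  norm_num

lemma setIntegral_inv_max_Ioo {a : ℝ} (ha : a ∈ Ioo 0 1) :
    ∫ b in Ioo 0 1, (max a b)⁻¹ = 1 - log a := by
  rw [← integral_Ioc_eq_integral_Ioo, ← intervalIntegral.integral_of_le zero_le_one,
    integral_inv_max ha.1 ha.2.le, one_div, log_inv, sub_eq_add_neg]

lemma integrableOn_inv_max_unitSquare :
    IntegrableOn (fun p : ℝ × ℝ => (max p.1 p.2)⁻¹) (Ioo 0 1 ×ˢ Ioo 0 1) := by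
  rw [IntegrableOn, Measure.volume_eq_prod, ← Measure.prod_restrict]
  refine (integrable_prod_iff (by fun_prop)).2 ⟨?_, ?_⟩
  · exact ae_restrict_of_forall_mem measurableSet_Ioo fun a ha =>
      (continuous_inv_max ha.1).integrableOn_Icc.mono_set Ioo_subset_Icc_self
  · refine Integrable.congr (f := fun a => 1 - log a) ?_ ?_
    · exact (intervalIntegrable_iff_integrableOn_Ioo_of_le zero_le_one).1
        (intervalIntegrable_const.sub intervalIntegral.intervalIntegrable_log')
    · refine ae_restrict_of_forall_mem measurableSet_Ioo fun a ha => ?_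
      refine (setIntegral_inv_max_Ioo ha).symm.trans (setIntegral_congr_fun measurableSet_Ioo
        fun b _ => (norm_of_nonneg ?_).symm)
      exact inv_nonneg.2 (ha.1.le.trans (le_max_left a b))

lemma integral_inv_max_unitSquare :
    ∫ p in Ioo (0 : ℝ) 1 ×ˢ Ioo (0 : ℝ) 1, (max p.1 p.2)⁻¹ = 2 := by
  rw [Measure.volume_eq_prod, setIntegral_prod _ integrableOn_inv_max_unitSquare,
    setIntegral_congr_fun measurableSet_Ioo fun a ha => setIntegral_inv_max_Ioo ha,
    ← integral_Ioc_eq_integral_Ioo, ← intervalIntegral.integral_of_le zero_le_one,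
    integral_one_sub_log]

lemma K_zero : K 0 = 2 := by
  rw [K, ← integral_inv_max_unitSquare]
  exact setIntegral_congr_fun (measurableSet_Ioo.prod measurableSet_Ioo)
    fun p hp => Kfun_zero_apply hp.1.1 hp.2.1

theorem K_basic_properties :
    K 0 = 2 ∧ (∀ lam : ℝ, K lam = K (-lam)) ∧ (∀ lam : ℝ, 1 ≤ |lam| → K lam = 0) :=
  ⟨K_zero, fun lam => (K_neg lam).symm, fun _ => K_eq_zero_of_one_le_abs⟩
end

section
/- Let $N, h$ be positive integers with $h = N^2 + \Delta$ for some integer $\Delta$. Then the number of quadruples $(a,b,c,d) \in \{1,\ldots,N\}^4$ satisfying $ad - bc = h$ is at most $O_\varepsilon(N^{\varepsilon}(1 + |\Delta|))$ for every $\varepsilon > 0$, provided $|\Delta| \leq N^2$. -/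
open Finset Real

/-!
Every solution has `a * d = b * c + h > h`, so `(a, d)` lies in `[1, N]²` with `a * d > h`.
Then `a, d > h / N`, which leaves at most `(N - ⌊h / N⌋)² ≤ 2 (N² - h + 1) ≤ 2 (1 + |Δ|)` such
pairs. For each of them `(b, c)` is a factorisation of `a * d - h ≤ N²`, so there are at most
`τ(a * d - h) ≪_ε N^ε` choices by the divisor bound, which follows from
`τ(n) = ∏ (v_p(n) + 1)` by comparing each factor with `p ^ (ε v_p(n))`.
-/

lemma add_one_le_mul_rpow_two_pow {ε : ℝ} (hε : 0 < ε) (a : ℕ) :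
    (a + 1 : ℝ) ≤ (1 + 1 / (ε * log 2)) * ((2 : ℝ) ^ a) ^ ε := by
  have hx : 0 < ε * log 2 := mul_pos hε (log_pos one_lt_two)
  have hexp : ((2 : ℝ) ^ a) ^ ε = exp (a * (ε * log 2)) := by
    rw [← rpow_natCast, ← rpow_mul zero_le_two, rpow_def_of_pos zero_lt_two]
    ring_nf
  rw [hexp]
  have hlin := add_one_le_exp (a * (ε * log 2))
  have hcancel : 1 / (ε * log 2) * (a * (ε * log 2)) = a := by field_simp
  nlinarith [one_div_pos.2 hx, (Nat.cast_nonneg a : (0 : ℝ) ≤ a)]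

lemma add_one_le_pow_of_two_le {y : ℝ} (hy : 2 ≤ y) (a : ℕ) : (a + 1 : ℝ) ≤ y ^ a := by
  have := one_add_mul_le_pow (a := y - 1) (by linarith) a
  rw [add_sub_cancel] at this
  nlinarith [(Nat.cast_nonneg a : (0 : ℝ) ≤ a)]

lemma two_le_rpow_of_ceil_le {ε : ℝ} (hε : 0 < ε) {p : ℕ} (hp : ⌈(2 : ℝ) ^ (1 / ε)⌉₊ ≤ p) :
    2 ≤ (p : ℝ) ^ ε := by
  calc (2 : ℝ) = ((2 : ℝ) ^ (1 / ε)) ^ ε := by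
        rw [← rpow_mul zero_le_two, one_div_mul_cancel hε.ne', rpow_one]
    _ ≤ (p : ℝ) ^ ε := by
        gcongr
        exact (Nat.le_ceil _).trans (by exact_mod_cast hp)

/-- Primes below `2 ^ (1 / ε)` pay the constant `1 + 1 / (ε log 2)`; above it `p ^ ε ≥ 2`
already dominates `a + 1 ≤ 2 ^ a`. -/
lemma add_one_le_ite_mul_rpow_pow {ε : ℝ} (hε : 0 < ε) {p : ℕ} (hp : 2 ≤ p) (a : ℕ) :
    (a + 1 : ℝ) ≤
      (if p < ⌈(2 : ℝ) ^ (1 / ε)⌉₊ then 1 + 1 / (ε * log 2) else 1) * ((p : ℝ) ^ a) ^ ε := by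
  split_ifs with hsmall
  · calc (a + 1 : ℝ) ≤ (1 + 1 / (ε * log 2)) * ((2 : ℝ) ^ a) ^ ε :=
          add_one_le_mul_rpow_two_pow hε a
      _ ≤ (1 + 1 / (ε * log 2)) * ((p : ℝ) ^ a) ^ ε := by
          have : 0 < ε * log 2 := mul_pos hε (log_pos one_lt_two)
          gcongr
          exact_mod_cast hp
  · rw [one_mul, ← rpow_natCast, ← rpow_mul (Nat.cast_nonneg p), mul_comm, rpow_mul
      (Nat.cast_nonneg p), rpow_natCast]
    exact add_one_le_pow_of_two_le (two_le_rpow_of_ceil_le hε (not_lt.1 hsmall)) a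

lemma prod_ite_lt_le_pow {K : ℝ} (hK : 1 ≤ K) (s : Finset ℕ) (M : ℕ) :
    ∏ p ∈ s, (if p < M then K else 1) ≤ K ^ M := by
  rw [prod_ite, prod_const_one, mul_one, prod_const]
  refine pow_le_pow_right₀ hK ((card_le_card fun p hp => ?_).trans (card_range M).le)
  exact mem_range.2 (mem_filter.1 hp).2

theorem exists_card_divisors_le_mul_rpow {ε : ℝ} (hε : 0 < ε) :
    ∃ C : ℝ, 0 < C ∧ ∀ n : ℕ, n ≠ 0 → (#n.divisors : ℝ) ≤ C * (n : ℝ) ^ ε := by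
  set K : ℝ := 1 + 1 / (ε * log 2)
  have hK : 1 ≤ K := le_add_of_nonneg_right (by have := log_pos one_lt_two; positivity)
  set M := ⌈(2 : ℝ) ^ (1 / ε)⌉₊
  refine ⟨K ^ M, by positivity, fun n hn => ?_⟩
  calc (#n.divisors : ℝ) = ∏ p ∈ n.primeFactors, ((n.factorization p : ℝ) + 1) := by
        rw [Nat.card_divisors hn]; push_cast; rfl
    _ ≤ ∏ p ∈ n.primeFactors, (if p < M then K else 1) * ((p : ℝ) ^ n.factorization p) ^ ε :=
        prod_le_prod (fun _ _ => by positivity) fun p hp =>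
          add_one_le_ite_mul_rpow_pow hε (Nat.prime_of_mem_primeFactors hp).two_le _
    _ = (∏ p ∈ n.primeFactors, if p < M then K else 1) * (n : ℝ) ^ ε := by
        rw [prod_mul_distrib, finsetProd_rpow _ _ fun _ _ => by positivity]
        congr 2
        exact_mod_cast (Nat.prod_primeFactors_pow_factorization hn).symm
    _ ≤ K ^ M * (n : ℝ) ^ ε := by gcongr; exact prod_ite_lt_le_pow hK _ M

theorem exists_card_divisors_le_mul_rpow_of_le_sq {ε : ℝ} (hε : 0 < ε) :
    ∃ C : ℝ, 0 < C ∧ ∀ N n : ℕ, n ≠ 0 → n ≤ N ^ 2 → (#n.divisors : ℝ) ≤ C * (N : ℝ) ^ ε := by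
  obtain ⟨C, hC, hdiv⟩ := exists_card_divisors_le_mul_rpow (half_pos hε)
  refine ⟨C, hC, fun N n hn hle => ?_⟩
  calc (#n.divisors : ℝ) ≤ C * (n : ℝ) ^ (ε / 2) := hdiv n hn
    _ ≤ C * ((N : ℝ) ^ 2) ^ (ε / 2) := by gcongr; exact_mod_cast hle
    _ = C * (N : ℝ) ^ ε := by
      rw [← rpow_natCast, ← rpow_mul (Nat.cast_nonneg N)]
      congr 2
      push_cast
      ring

def detSolutions (N h : ℕ) : Finset ((ℕ × ℕ) × ℕ × ℕ) :=
  {x ∈ (Icc 1 N ×ˢ Icc 1 N) ×ˢ (Icc 1 N ×ˢ Icc 1 N) |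
    (x.1.1 : ℤ) * x.2.2 - (x.1.2 : ℤ) * x.2.1 = h}

lemma card_detSolutions_le_sum_card_divisors (N h : ℕ) :
    #(detSolutions N h) ≤
      ∑ p ∈ {p ∈ Icc 1 N ×ˢ Icc 1 N | h < p.1 * p.2}, #(p.1 * p.2 - h).divisors := by
  calc #(detSolutions N h)
      ≤ #({p ∈ Icc 1 N ×ˢ Icc 1 N | h < p.1 * p.2}.sigma
          fun p => (p.1 * p.2 - h).divisorsAntidiagonal) := by
        refine card_le_card_of_injOn (fun x => ⟨(x.1.1, x.2.2), (x.1.2, x.2.1)⟩) ?_ ?_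
        · rintro ⟨⟨a, b⟩, c, d⟩ hx
          simp only [detSolutions, coe_filter, Set.mem_ofPred_eq, mem_product, mem_Icc] at hx
          obtain ⟨⟨⟨⟨ha, haN⟩, hb, -⟩, ⟨hc, -⟩, hd, hdN⟩, hdet⟩ := hx
          have hbc : 1 ≤ b * c := Nat.mul_pos hb hc
          simp only [coe_sigma, Set.mem_sigma_iff, coe_filter, Set.mem_ofPred_eq, mem_product,
            mem_Icc, mem_coe, Nat.mem_divisorsAntidiagonal]
          omega
        · rintro ⟨⟨a, b⟩, c, d⟩ _ ⟨⟨a', b'⟩, c', d'⟩ _ hxy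
          simp_all
    _ = ∑ p ∈ {p ∈ Icc 1 N ×ˢ Icc 1 N | h < p.1 * p.2}, #(p.1 * p.2 - h).divisors := by
        rw [card_sigma]
        simp only [← Nat.map_div_right_divisors, card_map]

lemma sq_le_two_mul_add_one_of_mul_le {N r m : ℕ} (hN : 0 < N) (hr : N * r ≤ m + N)
    (hm : m ≤ N ^ 2) : r ^ 2 ≤ 2 * (m + 1) := by
  have hsq : (N * r) ^ 2 ≤ (m + N) ^ 2 := Nat.pow_le_pow_left hr 2
  have : N ^ 2 * r ^ 2 ≤ N ^ 2 * (2 * (m + 1)) := by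
    nlinarith [Nat.mul_le_mul_left m hm, two_mul_le_add_sq m N]
  exact Nat.le_of_mul_le_mul_left this (by positivity)

lemma card_filter_lt_mul_le (N h : ℕ) :
    #{p ∈ Icc 1 N ×ˢ Icc 1 N | h < p.1 * p.2} ≤ 2 * (N ^ 2 - h + 1) := by
  rcases N.eq_zero_or_pos with rfl | hN
  · simp
  have hsub : {p ∈ Icc 1 N ×ˢ Icc 1 N | h < p.1 * p.2} ⊆
      Icc (h / N + 1) N ×ˢ Icc (h / N + 1) N := by
    rintro ⟨a, d⟩ hp
    simp only [mem_filter, mem_product, mem_Icc] at hp ⊢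
    have ha : h < a * N := hp.2.trans_le (Nat.mul_le_mul_left a hp.1.2.2)
    have hd : h < d * N := hp.2.trans_le (by rw [mul_comm]; exact Nat.mul_le_mul_left d hp.1.1.2)
    have := (Nat.div_lt_iff_lt_mul hN).2 ha
    have := (Nat.div_lt_iff_lt_mul hN).2 hd
    omega
  have hwidth : N * (N - h / N) ≤ N ^ 2 - h + N := by
    have := Nat.div_add_mod h N
    have := Nat.mod_lt h hN
    rw [Nat.mul_sub, sq]
    omega
  calc #{p ∈ Icc 1 N ×ˢ Icc 1 N | h < p.1 * p.2} ≤ (N - h / N) ^ 2 := by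
        simpa [sq] using card_le_card hsub
    _ ≤ 2 * (N ^ 2 - h + 1) := sq_le_two_mul_add_one_of_mul_le hN hwidth (Nat.sub_le _ _)

theorem difference_solutions_bound :
    ∀ ε : ℝ, 0 < ε → ∃ C : ℝ, 0 < C ∧
      ∀ (N h : ℕ) (Δ : ℤ), 0 < N → 0 < h → (h : ℤ) = (N : ℤ) ^ 2 + Δ →
        |Δ| ≤ (N : ℤ) ^ 2 →
        ((((Finset.Icc 1 N ×ˢ Finset.Icc 1 N) ×ˢ (Finset.Icc 1 N ×ˢ Finset.Icc 1 N)).filter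
            (fun x => (x.1.1 : ℤ) * x.2.2 - (x.1.2 : ℤ) * x.2.1 = (h : ℤ))).card : ℝ)
          ≤ C * (N : ℝ) ^ ε * (1 + |(Δ : ℝ)|) := by
  intro ε hε
  obtain ⟨C, hC, hdiv⟩ := exists_card_divisors_le_mul_rpow_of_le_sq hε
  refine ⟨2 * C, by positivity, fun N h Δ _ _ hΔ _ => ?_⟩
  have hdivisors : ∀ p ∈ {p ∈ Icc 1 N ×ˢ Icc 1 N | h < p.1 * p.2},
      (#(p.1 * p.2 - h).divisors : ℝ) ≤ C * (N : ℝ) ^ ε := by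
    intro p hp
    simp only [mem_filter, mem_product, mem_Icc] at hp
    exact hdiv N _ (by omega) ((Nat.sub_le _ _).trans (by nlinarith))
  have hgap : ((N ^ 2 - h : ℕ) : ℝ) ≤ |(Δ : ℝ)| := by
    rw [← Nat.cast_pow] at hΔ
    have : ((N ^ 2 - h : ℕ) : ℤ) ≤ |Δ| := by rw [le_abs]; omega
    exact_mod_cast this
  calc (#(detSolutions N h) : ℝ)
      ≤ ∑ p ∈ {p ∈ Icc 1 N ×ˢ Icc 1 N | h < p.1 * p.2}, (#(p.1 * p.2 - h).divisors : ℝ) := by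
        exact_mod_cast card_detSolutions_le_sum_card_divisors N h
    _ ≤ #{p ∈ Icc 1 N ×ˢ Icc 1 N | h < p.1 * p.2} * (C * (N : ℝ) ^ ε) := by
        simpa using sum_le_card_nsmul _ _ _ hdivisors
    _ ≤ (2 * (N ^ 2 - h + 1) : ℕ) * (C * (N : ℝ) ^ ε) := by
        gcongr; exact_mod_cast card_filter_lt_mul_le N h
    _ = 2 * C * (N : ℝ) ^ ε * (1 + ((N ^ 2 - h : ℕ) : ℝ)) := by push_cast; ring
    _ ≤ 2 * C * (N : ℝ) ^ ε * (1 + |(Δ : ℝ)|) := by gcongr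
end
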